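/- For every integer a > 1, there exists an F₂-linear map h : (ZMod 2)^(2^a − 1 − a) → (ZMod 2)^a such that the graph Γ = { (x, h(x)) : x ∈ (ZMod 2)^(2^a − 1 − a) } is a dominating set of the hypercube Q_{2^a − 1} of cardinality 2^(2^a − 1 − a), which is the minimal domination number γ_{2^a − 1}. -/

import Mathlib

/-! The graph of `h` is the Hamming code. Send the `2^a - 1 - a` standard basis vectors of
`(ZMod 2)^(2^a - 1 - a)` bijectively onto the vectors of `(ZMod 2)^a` of weight at least 2. For a
point `(y₁, y₂)` the syndrome `y₂ - h y₁` either has weight at most 1, and then `(y₁, h y₁)` is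
within distance 1, or it equals `h eᵢ`, and then `(y₁ + eᵢ, y₂)` lies on the graph.
Minimality is the sphere-covering bound: a ball of radius 1 in `Q_n` has `n + 1 = 2^a` points,
so a dominating set has at least `2^n / 2^a` elements. -/

/-- A finite subset of the hypercube `Q_n = (ZMod 2)^n` is dominating if every point of the
hypercube is at Hamming distance at most 1 from some element of the subset. -/
def IsDominating {n : ℕ} (Δ : Finset (Fin n → ZMod 2)) : Prop :=
  ∀ y : Fin n → ZMod 2, ∃ x ∈ Δ, hammingDist x y ≤ 1

/-- The minimal domination number `γ_n` of the `n`-dimensional hypercube. -/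
noncomputable def gamma (n : ℕ) : ℕ :=
  sInf {k | ∃ Δ : Finset (Fin n → ZMod 2), IsDominating Δ ∧ Δ.card = k}

open Finset

section HammingBall

variable {ι : Type*} [Fintype ι] [DecidableEq ι]

lemma hammingNorm_single_le_one {R : Type*} [Zero R] [DecidableEq R] (i : ι) (r : R) :
    hammingNorm (Pi.single i r : ι → R) ≤ 1 := by
  refine (card_le_card fun j hj => mem_singleton.mpr ?_).trans_eq (card_singleton i)
  by_contra hji
  simp [Pi.single_eq_of_ne hji] at hj

lemma eq_zero_or_exists_eq_single_of_hammingNorm_le_one {s : ι → ZMod 2}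
    (hs : hammingNorm s ≤ 1) : s = 0 ∨ ∃ i, s = Pi.single i 1 := by
  rcases Nat.le_one_iff_eq_zero_or_eq_one.mp hs with h0 | h1
  · exact .inl (hammingNorm_eq_zero.mp h0)
  · obtain ⟨i, hi⟩ := card_eq_one.mp h1
    refine .inr ⟨i, funext fun j => ?_⟩
    have hj : s j ≠ 0 ↔ j = i := by simpa using Finset.ext_iff.mp hi j
    by_cases hji : j = i
    · subst hji
      rw [Pi.single_eq_same]
      exact (by decide : ∀ z : ZMod 2, z ≠ 0 → z = 1) _ (hj.mpr rfl)
    · rw [Pi.single_eq_of_ne hji]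
      exact not_not.mp (mt hj.mp hji)

lemma card_hammingNorm_le_one :
    #{s : ι → ZMod 2 | hammingNorm s ≤ 1} = Fintype.card ι + 1 := by
  have ball_eq : ({s : ι → ZMod 2 | hammingNorm s ≤ 1} : Finset _)
      = insert 0 (univ.image fun i => Pi.single i 1) := by
    ext s
    simp only [mem_filter, mem_univ, true_and, mem_insert, mem_image]
    constructor
    · intro hs
      obtain rfl | ⟨i, rfl⟩ := eq_zero_or_exists_eq_single_of_hammingNorm_le_one hs
      exacts [.inl rfl, .inr ⟨i, rfl⟩]
    · rintro (rfl | ⟨i, rfl⟩)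
      exacts [hammingNorm_zero.trans_le zero_le_one, hammingNorm_single_le_one i 1]
  rw [ball_eq, card_insert_of_notMem, card_image_of_injective, card_univ]
  · intro i j hij
    simpa [Pi.single_apply] using congrFun hij i
  · simp [Pi.single_eq_zero_iff]

lemma card_hammingDist_le_one (x : ι → ZMod 2) :
    #{y | hammingDist x y ≤ 1} = Fintype.card ι + 1 := by
  have ball_eq : ({y | hammingDist x y ≤ 1} : Finset _)
      = ({s | hammingNorm s ≤ 1} : Finset (ι → ZMod 2)).image (x + ·) := by
    ext y
    simp only [mem_filter, mem_univ, true_and, mem_image, hammingDist_eq_hammingNorm]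
    exact ⟨fun hy => ⟨-x + y, hy, add_neg_cancel_left x y⟩,
      by rintro ⟨s, hs, rfl⟩; rwa [neg_add_cancel_left]⟩
  rw [ball_eq, card_image_of_injective _ (add_right_injective x), card_hammingNorm_le_one]

lemma card_one_lt_hammingNorm :
    #{s : ι → ZMod 2 | 1 < hammingNorm s} = 2 ^ Fintype.card ι - (Fintype.card ι + 1) := by
  have := card_filter_add_card_filter_not (s := univ) fun s : ι → ZMod 2 => hammingNorm s ≤ 1
  simp only [card_hammingNorm_le_one, not_le, card_univ, Fintype.card_fun, ZMod.card] at this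
  omega

end HammingBall

lemma IsDominating.two_pow_le_card_mul {n : ℕ} {Δ : Finset (Fin n → ZMod 2)}
    (hΔ : IsDominating Δ) : 2 ^ n ≤ #Δ * (n + 1) :=
  calc 2 ^ n = #(univ : Finset (Fin n → ZMod 2)) := by simp
    _ ≤ #(Δ.biUnion fun x => {y | hammingDist x y ≤ 1}) :=
        card_le_card fun y _ => by simpa using hΔ y
    _ ≤ ∑ x ∈ Δ, #{y | hammingDist x y ≤ 1} := card_biUnion_le
    _ = #Δ * (n + 1) := by simp [card_hammingDist_le_one]

lemma gamma_le_card {n : ℕ} {Δ : Finset (Fin n → ZMod 2)} (hΔ : IsDominating Δ) :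
    gamma n ≤ #Δ :=
  Nat.sInf_le ⟨Δ, hΔ, rfl⟩

lemma two_pow_le_gamma_mul (n : ℕ) : 2 ^ n ≤ gamma n * (n + 1) := by
  obtain ⟨Δ, hΔ, hcard⟩ :
      gamma n ∈ {k | ∃ Δ : Finset (Fin n → ZMod 2), IsDominating Δ ∧ #Δ = k} :=
    Nat.sInf_mem ⟨_, univ, fun y => ⟨y, mem_univ y, by simp⟩, rfl⟩
  exact hcard ▸ hΔ.two_pow_le_card_mul

lemma hammingDist_append {α : Type*} [DecidableEq α] {m n : ℕ} (x₁ y₁ : Fin m → α)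
    (x₂ y₂ : Fin n → α) :
    hammingDist (Fin.append x₁ x₂) (Fin.append y₁ y₂) =
      hammingDist x₁ y₁ + hammingDist x₂ y₂ := by
  simp only [hammingDist, card_filter, Fin.sum_univ_add, Fin.append_left, Fin.append_right]

theorem exists_hammingDist_add_hammingDist_le_one {R ι κ : Type*} [Ring R] [DecidableEq R]
    [Fintype ι] [DecidableEq ι] [Fintype κ] (h : (ι → R) →ₗ[R] (κ → R))
    (h_single : ∀ s, 1 < hammingNorm s → ∃ i, h (Pi.single i 1) = s) (y₁ : ι → R)
    (y₂ : κ → R) : ∃ x, hammingDist x y₁ + hammingDist (h x) y₂ ≤ 1 := by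
  by_cases hy : hammingDist (h y₁) y₂ ≤ 1
  · exact ⟨y₁, by rwa [hammingDist_self, zero_add]⟩
  obtain ⟨i, hi⟩ := h_single (-h y₁ + y₂) (by rw [← hammingDist_eq_hammingNorm]; omega)
  refine ⟨y₁ + Pi.single i 1, ?_⟩
  rw [map_add, hi, add_neg_cancel_left, hammingDist_self, hammingDist_comm,
    hammingDist_eq_hammingNorm, neg_add_cancel_left]
  exact hammingNorm_single_le_one i 1

theorem exists_linearMap_graph_dominating {m a : ℕ} (hma : m + a + 1 = 2 ^ a) :
    ∃ h : (Fin m → ZMod 2) →ₗ[ZMod 2] (Fin a → ZMod 2),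
      ∀ y : (Fin m → ZMod 2) × (Fin a → ZMod 2), ∃ x,
        hammingDist x y.1 + hammingDist (h x) y.2 ≤ 1 := by
  have hcard : #{s : Fin a → ZMod 2 | 1 < hammingNorm s} = m := by
    rw [card_one_lt_hammingNorm, Fintype.card_fin]
    omega
  let e := equivFinOfCardEq hcard
  refine ⟨Fintype.linearCombination (ZMod 2) fun i => (e.symm i).1, fun y => ?_⟩
  refine exists_hammingDist_add_hammingDist_le_one _ (fun s hs => ?_) y.1 y.2
  exact ⟨e ⟨s, by simpa using hs⟩, by simp⟩

lemma gamma_add_le_two_pow {m a : ℕ} {h : (Fin m → ZMod 2) → (Fin a → ZMod 2)}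
    (hh : ∀ y : (Fin m → ZMod 2) × (Fin a → ZMod 2), ∃ x,
      hammingDist x y.1 + hammingDist (h x) y.2 ≤ 1) :
    gamma (m + a) ≤ 2 ^ m := by
  refine (gamma_le_card (Δ := univ.image fun x => Fin.append x (h x)) fun y => ?_).trans ?_
  · obtain ⟨x, hx⟩ := hh (fun i => y (Fin.castAdd a i), fun j => y (Fin.natAdd m j))
    refine ⟨_, mem_image_of_mem _ (mem_univ x), ?_⟩
    rwa [← Fin.append_castAdd_natAdd (f := y), hammingDist_append]
  · exact card_image_le.trans (by simp)

lemma two_pow_le_gamma_add {m a : ℕ} (hma : m + a + 1 = 2 ^ a) : 2 ^ m ≤ gamma (m + a) := by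
  have := two_pow_le_gamma_mul (m + a)
  rw [hma, pow_add] at this
  exact Nat.le_of_mul_le_mul_right this (by positivity)

theorem stmt_2_general (a : ℕ) :
    ∃ h : (Fin (2 ^ a - 1 - a) → ZMod 2) →ₗ[ZMod 2] (Fin a → ZMod 2),
      (∀ y : (Fin (2 ^ a - 1 - a) → ZMod 2) × (Fin a → ZMod 2),
        ∃ x : Fin (2 ^ a - 1 - a) → ZMod 2,
          hammingDist x y.1 + hammingDist (h x) y.2 ≤ 1) ∧
      (Finset.image (fun x : Fin (2 ^ a - 1 - a) → ZMod 2 => (x, h x)) Finset.univ).card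
        = 2 ^ (2 ^ a - 1 - a) ∧
      gamma (2 ^ a - 1) = 2 ^ (2 ^ a - 1 - a) := by
  have hma : 2 ^ a - 1 - a + a + 1 = 2 ^ a := by
    have := a.lt_two_pow_self
    omega
  obtain ⟨h, hh⟩ := exists_linearMap_graph_dominating hma
  refine ⟨h, hh, ?_, ?_⟩
  · rw [card_image_of_injective _ fun x y hxy => congrArg Prod.fst hxy]
    simp
  · have := (gamma_add_le_two_pow hh).antisymm (two_pow_le_gamma_add hma)
    rwa [show 2 ^ a - 1 - a + a = 2 ^ a - 1 by omega] at this

/-- For every `a > 1` there is an `𝔽₂`-linear map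
`h : (ZMod 2)^(2^a - 1 - a) → (ZMod 2)^a` whose graph
`Γ = {(x, h x)}` is a dominating set of `Q_{2^a - 1}`
(identified with `(ZMod 2)^(2^a - 1 - a) × (ZMod 2)^a`, whose Hamming distance is the
sum of the Hamming distances of the two components) of cardinality `2^(2^a - 1 - a)`,
which equals the minimal domination number `γ_{2^a - 1}`. -/
theorem stmt_2 (a : ℕ) (ha : 1 < a) :
    ∃ h : (Fin (2 ^ a - 1 - a) → ZMod 2) →ₗ[ZMod 2] (Fin a → ZMod 2),
      (∀ y : (Fin (2 ^ a - 1 - a) → ZMod 2) × (Fin a → ZMod 2),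
        ∃ x : Fin (2 ^ a - 1 - a) → ZMod 2,
          hammingDist x y.1 + hammingDist (h x) y.2 ≤ 1) ∧
      (Finset.image (fun x : Fin (2 ^ a - 1 - a) → ZMod 2 => (x, h x)) Finset.univ).card
        = 2 ^ (2 ^ a - 1 - a) ∧
      gamma (2 ^ a - 1) = 2 ^ (2 ^ a - 1 - a) :=
  stmt_2_general a
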